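/- For a bounded nonnegative random variable L with values in [0,B] and ρ ∈ (0,1), the function c ↦ c + (1/ρ)·E[(L - c)_+] is convex on ℝ and attains its minimum over [0,B] (in fact over all of ℝ) at the (1-ρ)-quantile of L. -/

import Mathlib

/-!
Convexity is inherited from the convexity of `c ↦ (x - c)₊` by integration. For minimality,
write `F` for the distribution function of the law of `L` and `q` for its `(1 - ρ)`-quantile:
right continuity of `F` gives `P(L > q) ≤ ρ`, and `F < 1 - ρ` on `(-∞, q)` gives
`P(L ≥ q) ≥ ρ`. Integrating `(x - c)₊ - (x - q)₊ ≥ (q - c) 1_M(x)` with `M = {x > q}` when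
`q ≤ c` and `M = {x ≥ q}` when `c ≤ q` then yields `E(L - c)₊ - E(L - q)₊ ≥ (q - c) ρ`.
-/

open MeasureTheory ProbabilityTheory Set Filter Topology

theorem convexOn_integral {Ω E : Type*} [MeasurableSpace Ω] {μ : Measure Ω}
    [AddCommMonoid E] [Module ℝ E] {s : Set E} {f : Ω → E → ℝ}
    (hf : ∀ ω, ConvexOn ℝ s (f ω)) (hs : Convex ℝ s)
    (hint : ∀ x ∈ s, Integrable (fun ω => f ω x) μ) :
    ConvexOn ℝ s (fun x => ∫ ω, f ω x ∂μ) := by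
  refine ⟨hs, fun x hx y hy a b ha hb hab => ?_⟩
  calc ∫ ω, f ω (a • x + b • y) ∂μ
      ≤ ∫ ω, a * f ω x + b * f ω y ∂μ :=
        integral_mono (hint _ (hs hx hy ha hb hab))
          (((hint x hx).const_mul a).add ((hint y hy).const_mul b))
          fun ω => (hf ω).2 hx hy ha hb hab
    _ = a • ∫ ω, f ω x ∂μ + b • ∫ ω, f ω y ∂μ := by
        rw [integral_add ((hint x hx).const_mul a) ((hint y hy).const_mul b),
          integral_const_mul, integral_const_mul, smul_eq_mul, smul_eq_mul]

lemma convexOn_posPart_sub (x : ℝ) : ConvexOn ℝ univ (fun c : ℝ => max (x - c) 0) :=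
  ((convexOn_const x convex_univ).sub (concaveOn_id convex_univ)).sup
    (convexOn_const 0 convex_univ)

lemma convexOn_integral_posPart_sub {Ω : Type*} [MeasurableSpace Ω] {μ : Measure Ω}
    [IsFiniteMeasure μ] {L : Ω → ℝ} (hL : Integrable L μ) :
    ConvexOn ℝ univ (fun c : ℝ => ∫ ω, max (L ω - c) 0 ∂μ) :=
  convexOn_integral (fun ω => convexOn_posPart_sub (L ω)) convex_univ
    fun c _ => (hL.sub (integrable_const c)).pos_part

section Tail

variable {ν : Measure ℝ} [IsFiniteMeasure ν]

lemma sub_mul_measureReal_le_integral_posPart_sub (hν : Integrable id ν) {q : ℝ} {M : Set ℝ}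
    (hM : MeasurableSet M) (hIoi : Ioi q ⊆ M) (hIci : M ⊆ Ici q) (c : ℝ) :
    (q - c) * ν.real M ≤ ∫ x, max (x - c) 0 ∂ν - ∫ x, max (x - q) 0 ∂ν := by
  have hint : ∀ c : ℝ, Integrable (fun x : ℝ => max (x - c) 0) ν :=
    fun c => (hν.sub (integrable_const c)).pos_part
  rw [← integral_sub (hint c) (hint q), mul_comm, ← smul_eq_mul, ← integral_indicator_const _ hM]
  refine integral_mono ((integrable_const _).indicator hM) ((hint c).sub (hint q)) fun x => ?_
  by_cases hx : x ∈ M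
  · have hqx : q ≤ x := hIci hx
    simp only [indicator_of_mem hx, max_eq_left (sub_nonneg.2 hqx)]
    linarith [le_max_left (x - c) 0]
  · have hxq : x ≤ q := not_lt.1 fun h => hx (hIoi h)
    simp only [indicator_of_notMem hx, max_eq_right (sub_nonpos.2 hxq)]
    linarith [le_max_right (x - c) 0]

lemma integral_posPart_sub_add_le (hν : Integrable id ν) {q ρ : ℝ} (hIoi : ν.real (Ioi q) ≤ ρ)
    (hIci : ρ ≤ ν.real (Ici q)) (c : ℝ) :
    ∫ x, max (x - q) 0 ∂ν + (q - c) * ρ ≤ ∫ x, max (x - c) 0 ∂ν := by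
  rcases le_total q c with hqc | hcq
  · have := sub_mul_measureReal_le_integral_posPart_sub (q := q) hν measurableSet_Ioi subset_rfl
      Ioi_subset_Ici_self c
    nlinarith
  · have := sub_mul_measureReal_le_integral_posPart_sub (q := q) hν measurableSet_Ici
      Ioi_subset_Ici_self subset_rfl c
    nlinarith

end Tail

/-- A junk value (`sInf` of an empty or unbounded set) unless `0 < p < 1`. -/
noncomputable def quantile (ν : Measure ℝ) (p : ℝ) : ℝ := sInf {β | p ≤ cdf ν β}

section Quantile

variable {ν : Measure ℝ} {p : ℝ}

lemma bddBelow_setOf_le_cdf (hp : 0 < p) : BddBelow {β | p ≤ cdf ν β} := by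
  obtain ⟨β₀, hβ₀⟩ := ((tendsto_cdf_atBot ν).eventually (gt_mem_nhds hp)).exists
  exact ⟨β₀, fun β hβ => not_lt.1 fun hlt => (hβ.trans ((cdf ν).mono hlt.le)).not_gt hβ₀⟩

lemma nonempty_setOf_le_cdf (hp : p < 1) : {β | p ≤ cdf ν β}.Nonempty :=
  ((tendsto_cdf_atTop ν).eventually (lt_mem_nhds hp)).exists.imp fun _ => le_of_lt

lemma le_cdf_quantile (hp : p < 1) : p ≤ cdf ν (quantile ν p) := by
  refine ge_of_tendsto ((cdf ν).right_continuous _ |>.mono Ioi_subset_Ici_self)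
    (eventually_nhdsWithin_of_forall fun β hβ => ?_)
  obtain ⟨β', hβ', hlt⟩ := exists_lt_of_csInf_lt (nonempty_setOf_le_cdf hp) hβ
  exact hβ'.trans ((cdf ν).mono hlt.le)

lemma cdf_lt_of_lt_quantile (hp : 0 < p) {β : ℝ} (hβ : β < quantile ν p) : cdf ν β < p :=
  not_le.1 (notMem_of_lt_csInf (s := {β | p ≤ cdf ν β}) hβ (bddBelow_setOf_le_cdf hp))

lemma leftLim_cdf_quantile_le (hp : 0 < p) : Function.leftLim (cdf ν) (quantile ν p) ≤ p :=
  le_of_tendsto ((cdf ν).mono.tendsto_leftLim _)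
    (eventually_nhdsWithin_of_forall fun _ hβ => (cdf_lt_of_lt_quantile hp hβ).le)

lemma measure_Ioi_eq_ofReal_one_sub_cdf [IsProbabilityMeasure ν] (x : ℝ) :
    ν (Ioi x) = ENNReal.ofReal (1 - cdf ν x) := by
  rw [← (cdf ν).measure_Ioi (tendsto_cdf_atTop ν), measure_cdf]

lemma measure_Ici_eq_ofReal_one_sub_leftLim_cdf [IsProbabilityMeasure ν] (x : ℝ) :
    ν (Ici x) = ENNReal.ofReal (1 - Function.leftLim (cdf ν) x) := by
  rw [← (cdf ν).measure_Ici (tendsto_cdf_atTop ν), measure_cdf]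

lemma measureReal_Ioi_quantile_le [IsProbabilityMeasure ν] (hp : p < 1) :
    ν.real (Ioi (quantile ν p)) ≤ 1 - p := by
  rw [measureReal_def, measure_Ioi_eq_ofReal_one_sub_cdf,
    ENNReal.toReal_ofReal (sub_nonneg.2 (cdf_le_one ν _))]
  linarith [le_cdf_quantile (ν := ν) hp]

lemma le_measureReal_Ici_quantile [IsProbabilityMeasure ν] (hp : 0 < p) :
    1 - p ≤ ν.real (Ici (quantile ν p)) := by
  rw [measureReal_def, measure_Ici_eq_ofReal_one_sub_leftLim_cdf, ENNReal.toReal_ofReal']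
  exact (sub_le_sub_left (leftLim_cdf_quantile_le hp) 1).trans (le_max_left _ _)

end Quantile

theorem integral_posPart_sub_quantile_le {ν : Measure ℝ} [IsProbabilityMeasure ν]
    (hν : Integrable id ν) {ρ : ℝ} (hρ : ρ ∈ Ioo 0 1) (c : ℝ) :
    quantile ν (1 - ρ) + (1 / ρ) * ∫ x, max (x - quantile ν (1 - ρ)) 0 ∂ν ≤
      c + (1 / ρ) * ∫ x, max (x - c) 0 ∂ν := by
  obtain ⟨hρ₀, hρ₁⟩ := hρ
  have key := integral_posPart_sub_add_le hν
    (by simpa using measureReal_Ioi_quantile_le (ν := ν) (by linarith : 1 - ρ < 1))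
    (by simpa using le_measureReal_Ici_quantile (ν := ν) (by linarith : 0 < 1 - ρ)) c
  have hρc : (1 / ρ) * ((quantile ν (1 - ρ) - c) * ρ) = quantile ν (1 - ρ) - c := by
    field_simp
  nlinarith [mul_le_mul_of_nonneg_left key (by positivity : 0 ≤ 1 / ρ)]

theorem stmt_8_general {Ω : Type*} [MeasurableSpace Ω] (μ : Measure Ω) [IsProbabilityMeasure μ]
    (L : Ω → ℝ) (ρ : ℝ) (hρ : ρ ∈ Set.Ioo (0:ℝ) 1)
    (hL : Integrable L μ) :
    ConvexOn ℝ Set.univ (fun c : ℝ => c + (1/ρ) * ∫ ω, max (L ω - c) 0 ∂μ) ∧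
      ∀ c : ℝ,
        (fun c : ℝ => c + (1/ρ) * ∫ ω, max (L ω - c) 0 ∂μ)
            (sInf {β : ℝ | 1 - ρ ≤ (μ {ω | L ω ≤ β}).toReal}) ≤
          c + (1/ρ) * ∫ ω, max (L ω - c) 0 ∂μ := by
  refine ⟨(convexOn_id convex_univ).add
    ((convexOn_integral_posPart_sub hL).smul (one_div_nonneg.2 hρ.1.le)), fun c => ?_⟩
  have hLm := hL.aemeasurable
  have := Measure.isProbabilityMeasure_map hLm
  have hcdf (β : ℝ) : (μ {ω | L ω ≤ β}).toReal = cdf (μ.map L) β := by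
    rw [cdf_eq_real, measureReal_def, Measure.map_apply_of_aemeasurable hLm measurableSet_Iic]
    rfl
  have hintegral (c : ℝ) : ∫ ω, max (L ω - c) 0 ∂μ = ∫ x, max (x - c) 0 ∂(μ.map L) :=
    (integral_map (f := fun x => max (x - c) 0) hLm (by fun_prop)).symm
  simp only [hcdf, hintegral]
  exact integral_posPart_sub_quantile_le
    ((integrable_map_measure aestronglyMeasurable_id hLm).2 hL) hρ c

theorem stmt_8 {Ω : Type*} [MeasurableSpace Ω] (μ : Measure Ω) [IsProbabilityMeasure μ]
    (L : Ω → ℝ) (B ρ : ℝ) (hB : 0 ≤ B) (hρ : ρ ∈ Set.Ioo (0:ℝ) 1)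
    (hL : Integrable L μ) (hbd : ∀ᵐ ω ∂μ, L ω ∈ Set.Icc (0:ℝ) B) :
    ConvexOn ℝ Set.univ (fun c : ℝ => c + (1/ρ) * ∫ ω, max (L ω - c) 0 ∂μ) ∧
      ∀ c : ℝ,
        (fun c : ℝ => c + (1/ρ) * ∫ ω, max (L ω - c) 0 ∂μ)
            (sInf {β : ℝ | 1 - ρ ≤ (μ {ω | L ω ≤ β}).toReal}) ≤
          c + (1/ρ) * ∫ ω, max (L ω - c) 0 ∂μ :=
  stmt_8_general μ L ρ hρ hL
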